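/- arXiv:2204.11176 — 2 statements merged into one kernel-verified Lean document; each statement's English description precedes it below -/
import Mathlib

section
/- Let $K$ be a strictly increasing multi-index containing distinct elements $k<m'<n'$, and let $s$ be any index not in $K\setminus\{k,m'\}$. Then $\mathrm{sgn}\binom{K}{km'\,K\setminus\{k,m'\}}\cdot\mathrm{sgn}\binom{sK\setminus\{k,m'\}}{sn'\,K\setminus\{k,m',n'\}} = (-1)^{(n',K\setminus n')}\,\mathrm{sgn}\binom{K\setminus n'}{km'\,K\setminus\{k,m',n'\}}$. -/
open Finset

noncomputable section

/-- The strictly increasing enumeration of a finite set of naturals. -/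
def inc (s : Finset ℕ) : Fin s.card → ℕ := fun i => s.orderEmbOfFin rfl i

/-- `sgn (J ↦ K)`: the sign of the permutation taking the sequence `J` to the sequence
`K` (both rearrangements of the same set), and `0` if they are not rearrangements. -/
def psgn {α : Type*} [DecidableEq α] {m : ℕ} (J K : Fin m → α) : ℤ :=
  ∑ σ : Equiv.Perm (Fin m), if K = J ∘ σ then (Equiv.Perm.sign σ : ℤ) else 0

/-- `(m, L)`: the number of entries of `L` strictly less than `m`. -/
def cnt (m : ℕ) (L : Finset ℕ) : ℕ := (L.filter fun x => x < m).card

/- ### Auxiliary lemmas -/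

lemma psgn_comp {α : Type*} [DecidableEq α] {m : ℕ} {J : Fin m → α}
    (hJ : Function.Injective J) (σ : Equiv.Perm (Fin m)) :
    psgn J (J ∘ ⇑σ) = (Equiv.Perm.sign σ : ℤ) := by
  unfold psgn
  rw [Finset.sum_eq_single σ]
  · rw [if_pos rfl]
  · intro τ _ hτ
    rw [if_neg]
    intro h
    exact hτ (Equiv.ext fun i => (hJ (congrFun h i)).symm)
  · intro h; exact absurd (Finset.mem_univ σ) h

lemma psgn_cast {α : Type*} [DecidableEq α] {m n : ℕ} (h : m = n) (J K : Fin n → α) :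
    psgn (J ∘ Fin.cast h) (K ∘ Fin.cast h) = psgn J K := by
  subst h; rfl

lemma cons_comp_cast {α : Type*} {m n : ℕ} (h : m = n) (h' : m + 1 = n + 1) (x : α)
    (f : Fin n → α) :
    (Fin.cons x f : Fin (n + 1) → α) ∘ Fin.cast h' = Fin.cons x (f ∘ Fin.cast h) := by
  subst h; rfl

lemma cons_comp_decompose {α : Type*} {n : ℕ} (a : α) (J : Fin n → α) (e : Equiv.Perm (Fin n)) :
    (Fin.cons a J : Fin (n+1) → α) ∘ ⇑(Equiv.Perm.decomposeFin.symm (0, e)) =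
      Fin.cons a (J ∘ ⇑e) := by
  funext i
  refine Fin.cases ?_ (fun i => ?_) i
  · simp
  · simp [Equiv.Perm.decomposeFin_symm_apply_succ, Equiv.swap_self]

lemma pull {α : Type*} {n : ℕ} (J : Fin (n + 1) → α) (p : Fin (n + 1)) :
    J ∘ ⇑(p.cycleRange⁻¹) = Fin.cons (J p) (J ∘ p.succAbove) := by
  funext i
  refine Fin.cases ?_ (fun i => ?_) i
  · show J (p.cycleRange⁻¹ 0) = J p
    congr 1
    rw [Equiv.Perm.inv_def, Equiv.symm_apply_eq, Fin.cycleRange_self]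
  · show J (p.cycleRange⁻¹ i.succ) = J (p.succAbove i)
    congr 1
    rw [Equiv.Perm.inv_def, Equiv.symm_apply_eq]
    rcases lt_or_ge i.castSucc p with h | h
    · rw [Fin.succAbove_of_castSucc_lt _ _ h, Fin.cycleRange_of_lt h, Fin.coeSucc_eq_succ]
    · rw [Fin.succAbove_of_le_castSucc _ _ h,
        Fin.cycleRange_of_gt (lt_of_le_of_lt h (Fin.castSucc_lt_succ (i := i)))]

lemma psgn_cons_cons {α : Type*} [DecidableEq α] {n : ℕ} {a : α} {J K : Fin n → α}
    (ha : a ∉ Set.range J) :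
    psgn (Fin.cons a J) (Fin.cons a K) = psgn J K := by
  unfold psgn
  rw [Finset.univ_perm_fin_succ, Finset.sum_map, Fintype.sum_prod_type,
    Finset.sum_eq_single (0 : Fin (n+1))]
  · refine Finset.sum_congr rfl fun e _ => ?_
    simp only [Equiv.coe_toEmbedding]
    rw [cons_comp_decompose, Equiv.Perm.decomposeFin.symm_sign, if_pos rfl, one_mul]
    exact if_congr ⟨fun h => funext fun i => by simpa using congrFun h i.succ,
      fun h => by rw [h]⟩ rfl rfl
  · intro p _ hp
    refine Finset.sum_eq_zero fun e _ => if_neg fun hcon => ?_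
    have h0 := congrFun hcon 0
    simp only [Equiv.coe_toEmbedding, Function.comp_apply,
      Equiv.Perm.decomposeFin_symm_apply_zero, Fin.cons_zero] at h0
    obtain ⟨i, rfl⟩ := Fin.exists_succ_eq.2 hp
    rw [Fin.cons_succ] at h0
    exact ha ⟨i, h0.symm⟩
  · intro h; exact absurd (Finset.mem_univ _) h

lemma exists_index {A : Finset ℕ} {n : ℕ} (h : A.card = n) {a : ℕ} (ha : a ∈ A) :
    ∃ q : Fin n, A.orderEmbOfFin h q = a := by
  have := Finset.range_orderEmbOfFin A h
  have : a ∈ Set.range (A.orderEmbOfFin h) := by rw [this]; exact ha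
  exact this

lemma orderEmb_erase {A : Finset ℕ} {n : ℕ} (h : A.card = n + 1) {q : Fin (n + 1)} {a : ℕ}
    (hq : A.orderEmbOfFin h q = a) (h' : (A.erase a).card = n) :
    ⇑((A.erase a).orderEmbOfFin h') = ⇑(A.orderEmbOfFin h) ∘ q.succAbove := by
  subst hq
  symm
  apply Finset.orderEmbOfFin_unique
  · intro i
    refine Finset.mem_erase.2 ⟨fun hEq => ?_, Finset.orderEmbOfFin_mem _ _ _⟩
    exact Fin.succAbove_ne q i ((A.orderEmbOfFin h).injective hEq)
  · exact (A.orderEmbOfFin h).strictMono.comp (Fin.strictMono_succAbove q)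

lemma orderEmb_cast {A : Finset ℕ} {m n : ℕ} (h1 : A.card = m) (h2 : A.card = n) (hc : m = n) :
    ⇑(A.orderEmbOfFin h1) = ⇑(A.orderEmbOfFin h2) ∘ Fin.cast hc := by
  subst hc; rfl

lemma orderEmb_congr {A B : Finset ℕ} {n : ℕ} (hAB : A = B) (h1 : A.card = n) (h2 : B.card = n) :
    ⇑(A.orderEmbOfFin h1) = ⇑(B.orderEmbOfFin h2) := by
  subst hAB; rfl

lemma index_eq_cnt {A : Finset ℕ} {n : ℕ} (h : A.card = n) (q : Fin n) :
    (q : ℕ) = cnt (A.orderEmbOfFin h q) A := by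
  have himg : A.filter (fun x => x < A.orderEmbOfFin h q) =
      (Finset.univ.filter (fun i : Fin n => i < q)).image (A.orderEmbOfFin h) := by
    ext x
    simp only [Finset.mem_filter, Finset.mem_image, Finset.mem_univ, true_and]
    constructor
    · rintro ⟨hxA, hxlt⟩
      obtain ⟨i, hi⟩ := exists_index h hxA
      exact ⟨i, (A.orderEmbOfFin h).strictMono.lt_iff_lt.mp (by rw [hi]; exact hxlt), hi⟩
    · rintro ⟨i, hiq, rfl⟩
      exact ⟨Finset.orderEmbOfFin_mem _ _ _, (A.orderEmbOfFin h).strictMono hiq⟩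
  unfold cnt
  rw [himg, Finset.card_image_of_injective _ (A.orderEmbOfFin h).injective,
    show (Finset.univ.filter (fun i : Fin n => i < q)) = Finset.Iio q from by ext; simp,
    Fin.card_Iio]

lemma cnt_erase_of_not_lt {b c : ℕ} {A : Finset ℕ} (h : ¬ c < b) :
    cnt b (A.erase c) = cnt b A := by
  unfold cnt
  rw [Finset.filter_erase, Finset.erase_eq_of_notMem]
  simp [h]

lemma cnt_erase_of_mem_lt {b c : ℕ} {A : Finset ℕ} (hb : b ∈ A) (h : b < c) :
    cnt c (A.erase b) + 1 = cnt c A := by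
  unfold cnt
  rw [Finset.filter_erase, Finset.card_erase_of_mem (by simp [hb, h])]
  have : 0 < (A.filter fun x => x < c).card :=
    Finset.card_pos.2 ⟨b, by simp [hb, h]⟩
  omega

/-- the sign identity
`sgn(K ↦ km'K∖{k,m'}) ⋅ sgn(sK∖{k,m'} ↦ sn'K∖{k,m',n'})
  = (-1)^{(n',K∖n')} sgn(K∖n' ↦ km'K∖{k,m',n'})`. -/
theorem stmt_7 (K : Finset ℕ) (k m' n' s : ℕ)
    (hk : k ∈ K) (hm : m' ∈ K) (hn : n' ∈ K)
    (hkm : k < m') (hmn : m' < n')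
    (hs : s ∉ K \ ({k, m'} : Finset ℕ))
    (e1 : (K \ ({k, m'} : Finset ℕ)).card + 2 = K.card)
    (e2 : (K \ ({k, m'} : Finset ℕ)).card + 1 = (K \ ({k, m', n'} : Finset ℕ)).card + 2)
    (e3 : (K \ ({k, m', n'} : Finset ℕ)).card + 2 = (K.erase n').card) :
    psgn (inc K)
        ((Fin.cons k (Fin.cons m' (inc (K \ ({k, m'} : Finset ℕ))))) ∘ Fin.cast e1.symm) *
      psgn (Fin.cons s (inc (K \ ({k, m'} : Finset ℕ))))
        ((Fin.cons s (Fin.cons n' (inc (K \ ({k, m', n'} : Finset ℕ))))) ∘ Fin.cast e2) =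
    (-1 : ℤ) ^ cnt n' (K.erase n') *
      psgn (inc (K.erase n'))
        ((Fin.cons k (Fin.cons m' (inc (K \ ({k, m', n'} : Finset ℕ))))) ∘
          Fin.cast e3.symm) := by
  classical
  set A : Finset ℕ := K \ {k, m'} with hA
  set B : Finset ℕ := K \ {k, m', n'} with hB
  -- set identities
  have hAset : A = (K.erase k).erase m' := by
    ext x; simp only [hA, Finset.mem_sdiff, Finset.mem_insert, Finset.mem_singleton,
      Finset.mem_erase]; tauto
  have hBsetA : B = A.erase n' := by
    ext x; simp only [hA, hB, Finset.mem_sdiff, Finset.mem_insert, Finset.mem_singleton,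
      Finset.mem_erase]; tauto
  have hBset' : B = ((K.erase n').erase k).erase m' := by
    ext x; simp only [hB, Finset.mem_sdiff, Finset.mem_insert, Finset.mem_singleton,
      Finset.mem_erase]; tauto
  -- memberships
  have hmek : m' ∈ K.erase k := Finset.mem_erase.2 ⟨by omega, hm⟩
  have hnA : n' ∈ A := by
    simp only [hA, Finset.mem_sdiff, Finset.mem_insert, Finset.mem_singleton]
    exact ⟨hn, by omega⟩
  have hkK' : k ∈ K.erase n' := Finset.mem_erase.2 ⟨by omega, hk⟩
  have hmK'k : m' ∈ (K.erase n').erase k :=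
    Finset.mem_erase.2 ⟨by omega, Finset.mem_erase.2 ⟨by omega, hm⟩⟩
  -- cardinalities
  have hcKk : (K.erase k).card = A.card + 1 := by
    rw [Finset.card_erase_of_mem hk]; omega
  have hcA' : ((K.erase k).erase m').card = A.card := by rw [← hAset]
  have hcAB : A.card = B.card + 1 := by omega
  have hcAeB : (A.erase n').card = B.card := by rw [← hBsetA]
  have hcK'k : ((K.erase n').erase k).card = B.card + 1 := by
    rw [Finset.card_erase_of_mem hkK']; omega
  have hcB' : (((K.erase n').erase k).erase m').card = B.card := by rw [← hBset']
  -- Factor 1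
  set f := K.orderEmbOfFin e1.symm with hfdef
  obtain ⟨i, hi⟩ := exists_index e1.symm hk
  set g := (K.erase k).orderEmbOfFin hcKk with hgdef
  have hg : ⇑g = ⇑f ∘ i.succAbove := orderEmb_erase e1.symm hi hcKk
  obtain ⟨j, hj⟩ := exists_index hcKk hmek
  have hincA : inc A = ⇑g ∘ j.succAbove := by
    have h1 : ⇑(((K.erase k).erase m').orderEmbOfFin hcA') = ⇑g ∘ j.succAbove :=
      orderEmb_erase hcKk hj hcA'
    rw [← h1]
    exact orderEmb_congr hAset rfl hcA'
  have hT1 : ⇑f ∘ ⇑(i.cycleRange⁻¹ * Equiv.Perm.decomposeFin.symm (0, j.cycleRange⁻¹)) =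
      Fin.cons k (Fin.cons m' (inc A)) := by
    rw [Equiv.Perm.coe_mul, ← Function.comp_assoc, pull f i, hi, ← hg, cons_comp_decompose,
      pull g j, hj, ← hincA]
  have hincK : inc K = ⇑f ∘ Fin.cast e1.symm := orderEmb_cast rfl e1.symm e1.symm
  have hfact1 : psgn (inc K) ((Fin.cons k (Fin.cons m' (inc A))) ∘ Fin.cast e1.symm) =
      (-1 : ℤ) ^ (i : ℕ) * (-1) ^ (j : ℕ) := by
    rw [hincK, psgn_cast, ← hT1, psgn_comp f.injective]
    rw [Equiv.Perm.sign_mul, Equiv.Perm.sign_inv, Fin.sign_cycleRange,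
      Equiv.Perm.decomposeFin.symm_sign, Equiv.Perm.sign_inv, Fin.sign_cycleRange,
      if_pos rfl, one_mul]
    push_cast
    ring
  -- Factor 2
  have hrs : s ∉ Set.range (inc A) := by
    rintro ⟨x, hx⟩
    exact hs (hx ▸ Finset.orderEmbOfFin_mem A rfl x)
  set g2 := A.orderEmbOfFin hcAB with hg2def
  obtain ⟨q, hq⟩ := exists_index hcAB hnA
  have hincB : inc B = ⇑g2 ∘ q.succAbove := by
    have h1 : ⇑((A.erase n').orderEmbOfFin hcAeB) = ⇑g2 ∘ q.succAbove :=
      orderEmb_erase hcAB hq hcAeB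
    rw [← h1]
    exact orderEmb_congr hBsetA rfl hcAeB
  have hT2 : ⇑g2 ∘ ⇑(q.cycleRange⁻¹) = Fin.cons n' (inc B) := by
    rw [pull g2 q, hq, ← hincB]
  have hfact2 : psgn (Fin.cons s (inc A)) ((Fin.cons s (Fin.cons n' (inc B))) ∘ Fin.cast e2) =
      (-1 : ℤ) ^ (q : ℕ) := by
    rw [cons_comp_cast hcAB e2 s (Fin.cons n' (inc B)), psgn_cons_cons hrs,
      show inc A = ⇑g2 ∘ Fin.cast hcAB from orderEmb_cast rfl hcAB hcAB,
      psgn_cast, ← hT2, psgn_comp g2.injective]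
    rw [Equiv.Perm.sign_inv, Fin.sign_cycleRange]
    push_cast
    ring
  -- Factor 3
  set f3 := (K.erase n').orderEmbOfFin e3.symm with hf3def
  obtain ⟨i3, hi3⟩ := exists_index e3.symm hkK'
  set g3 := ((K.erase n').erase k).orderEmbOfFin hcK'k with hg3def
  have hg3 : ⇑g3 = ⇑f3 ∘ i3.succAbove := orderEmb_erase e3.symm hi3 hcK'k
  obtain ⟨j3, hj3⟩ := exists_index hcK'k hmK'k
  have hincB3 : inc B = ⇑g3 ∘ j3.succAbove := by
    have h1 : ⇑((((K.erase n').erase k).erase m').orderEmbOfFin hcB') = ⇑g3 ∘ j3.succAbove :=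
      orderEmb_erase hcK'k hj3 hcB'
    rw [← h1]
    exact orderEmb_congr hBset' rfl hcB'
  have hT3 : ⇑f3 ∘ ⇑(i3.cycleRange⁻¹ * Equiv.Perm.decomposeFin.symm (0, j3.cycleRange⁻¹)) =
      Fin.cons k (Fin.cons m' (inc B)) := by
    rw [Equiv.Perm.coe_mul, ← Function.comp_assoc, pull f3 i3, hi3, ← hg3, cons_comp_decompose,
      pull g3 j3, hj3, ← hincB3]
  have hincK' : inc (K.erase n') = ⇑f3 ∘ Fin.cast e3.symm := orderEmb_cast rfl e3.symm e3.symm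
  have hfact3 : psgn (inc (K.erase n'))
      ((Fin.cons k (Fin.cons m' (inc B))) ∘ Fin.cast e3.symm) =
      (-1 : ℤ) ^ (i3 : ℕ) * (-1) ^ (j3 : ℕ) := by
    rw [hincK', psgn_cast, ← hT3, psgn_comp f3.injective]
    rw [Equiv.Perm.sign_mul, Equiv.Perm.sign_inv, Fin.sign_cycleRange,
      Equiv.Perm.decomposeFin.symm_sign, Equiv.Perm.sign_inv, Fin.sign_cycleRange,
      if_pos rfl, one_mul]
    push_cast
    ring
  -- index values
  have hiv : (i : ℕ) = cnt k K := by have := index_eq_cnt e1.symm i; rwa [hi] at this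
  have hjv : (j : ℕ) = cnt m' (K.erase k) := by have := index_eq_cnt hcKk j; rwa [hj] at this
  have hqv : (q : ℕ) = cnt n' A := by have := index_eq_cnt hcAB q; rwa [hq] at this
  have hi3v : (i3 : ℕ) = cnt k (K.erase n') := by
    have := index_eq_cnt e3.symm i3; rwa [hi3] at this
  have hj3v : (j3 : ℕ) = cnt m' ((K.erase n').erase k) := by
    have := index_eq_cnt hcK'k j3; rwa [hj3] at this
  -- cnt relations
  have c1 : cnt k (K.erase n') = cnt k K := cnt_erase_of_not_lt (by omega)
  have c2 : cnt m' ((K.erase n').erase k) = cnt m' (K.erase k) := by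
    rw [show (K.erase n').erase k = (K.erase k).erase n' from by
      ext x; simp only [Finset.mem_erase]; tauto]
    exact cnt_erase_of_not_lt (by omega)
  have c4 : cnt n' (K.erase n') = cnt n' K := cnt_erase_of_not_lt (by omega)
  have c3 : cnt n' A + 2 = cnt n' K := by
    have h1 : cnt n' ((K.erase k).erase m') + 1 = cnt n' (K.erase k) :=
      cnt_erase_of_mem_lt hmek (by omega)
    have h2 : cnt n' (K.erase k) + 1 = cnt n' K := cnt_erase_of_mem_lt hk (by omega)
    rw [hAset]; omega
  rw [hfact1, hfact2, hfact3, hiv, hjv, hqv, hi3v, hj3v, c1, c2, c4, ← c3, pow_add]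
  norm_num
  ring
end
end

section
/- Let $H_1, H_2, H_3$ be Hilbert spaces, $T: H_1\to H_2$ and $S: H_2\to H_3$ closed densely defined linear operators with $\mathrm{Im}\,T\subseteq \mathrm{Ker}\,S$. Suppose there is a constant $C>0$ such that $\|g\|_{H_2}^2 \le C^2(\|T^*g\|_{H_1}^2 + \|Sg\|_{H_3}^2)$ for all $g\in\mathrm{Dom}(T^*)\cap\mathrm{Dom}(S)$. Then for every $f\in H_2$ with $Sf=0$, there exists $u\in\mathrm{Dom}(T)$ with $Tu=f$ and $\|u\|_{H_1}\le C\|f\|_{H_2}$. -/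
open scoped ComplexOrder

local notation "⟪" x ", " y "⟫" => @inner ℂ _ _ x y

/-- Hörmander's existence lemma. Let `T : H₁ → H₂`, `S : H₂ → H₃` be closed
densely defined operators with `Im T ⊆ Ker S`, satisfying the a priori estimate
`‖g‖² ≤ C²(‖T*g‖² + ‖Sg‖²)` on `Dom T* ∩ Dom S`. Then for every `f ∈ Dom S` with
`Sf = 0` the equation `Tu = f` is solvable with `‖u‖ ≤ C‖f‖`. -/
theorem stmt_9 {H₁ H₂ H₃ : Type*}
    [NormedAddCommGroup H₁] [InnerProductSpace ℂ H₁] [CompleteSpace H₁]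
    [NormedAddCommGroup H₂] [InnerProductSpace ℂ H₂] [CompleteSpace H₂]
    [NormedAddCommGroup H₃] [InnerProductSpace ℂ H₃] [CompleteSpace H₃]
    (T : H₁ →ₗ.[ℂ] H₂) (hTdense : Dense (T.domain : Set H₁)) (hTclosed : T.IsClosed)
    (S : H₂ →ₗ.[ℂ] H₃) (hSdense : Dense (S.domain : Set H₂)) (hSclosed : S.IsClosed)
    (hTS : ∀ u : T.domain, ∃ h : T u ∈ S.domain, S ⟨T u, h⟩ = 0)
    (C : ℝ) (hC : 0 < C)
    (hest : ∀ g : H₂, ∀ hg₁ : g ∈ T.adjoint.domain, ∀ hg₂ : g ∈ S.domain,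
      ‖g‖ ^ 2 ≤ C ^ 2 * (‖T.adjoint ⟨g, hg₁⟩‖ ^ 2 + ‖S ⟨g, hg₂⟩‖ ^ 2)) :
    ∀ f : H₂, ∀ hf : f ∈ S.domain, S ⟨f, hf⟩ = 0 →
      ∃ u : T.domain, T u = f ∧ ‖(u : H₁)‖ ≤ C * ‖f‖ := by
  intro f hf hSf
  classical
  -- the kernel of `S` as a submodule of `H₂`
  set N : Submodule ℂ H₂ := S.graph.comap (LinearMap.inl ℂ H₂ H₃) with hNdef
  have hNmem : ∀ x : H₂, x ∈ N ↔ (x, (0 : H₃)) ∈ S.graph := fun x => Iff.rfl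
  have hNclosed : IsClosed (N : Set H₂) := by
    have : (N : Set H₂) = (ContinuousLinearMap.inl ℂ H₂ H₃) ⁻¹' (S.graph : Set (H₂ × H₃)) := rfl
    rw [this]
    exact hSclosed.preimage (ContinuousLinearMap.inl ℂ H₂ H₃).continuous
  haveI : CompleteSpace N := hNclosed.completeSpace_coe
  have hfN : f ∈ N := by
    rw [hNmem]
    have := S.mem_graph ⟨f, hf⟩
    rwa [hSf] at this
  have hTN : ∀ x : T.domain, T x ∈ N := by
    intro x
    obtain ⟨h, h0⟩ := hTS x
    rw [hNmem]
    have := S.mem_graph ⟨T x, h⟩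
    rwa [h0] at this
  -- if `x ∈ N` then `x ∈ Dom S` and `S x = 0`, giving the estimate `‖x‖ ≤ C ‖T* x‖`
  have hNestim : ∀ x : H₂, x ∈ N → ∀ hx : x ∈ T.adjoint.domain,
      ‖x‖ ≤ C * ‖T.adjoint ⟨x, hx⟩‖ := by
    intro x hxN hx
    rw [hNmem, S.mem_graph_iff] at hxN
    obtain ⟨y, hy1, hy2⟩ := hxN
    have hy1' : (y : H₂) = x := hy1
    have hxd : x ∈ S.domain := hy1' ▸ y.2
    have hSx : S ⟨x, hxd⟩ = 0 := by
      have : (⟨x, hxd⟩ : S.domain) = y := Subtype.ext hy1.symm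
      rw [this, hy2]
    have := hest x hx hxd
    rw [hSx] at this
    simp only [norm_zero] at this
    nlinarith [norm_nonneg x, norm_nonneg (T.adjoint ⟨x, hx⟩), hC.le,
      mul_nonneg hC.le (norm_nonneg (T.adjoint ⟨x, hx⟩)), sq_nonneg (‖x‖ - C * ‖T.adjoint ⟨x, hx⟩‖),
      sq_nonneg (‖x‖ + C * ‖T.adjoint ⟨x, hx⟩‖)]
  -- key estimate : |⟪g, f⟫| ≤ C ‖f‖ ‖T* g‖ for g ∈ Dom T*
  have key : ∀ g : T.adjoint.domain, ‖⟪(g : H₂), f⟫‖ ≤ C * ‖f‖ * ‖T.adjoint g‖ := by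
    intro g
    set n : H₂ := (Submodule.orthogonalProjectionOnto N (g : H₂) : H₂) with hn
    set m : H₂ := (g : H₂) - n with hm
    have hmN : m ∈ Nᗮ := Submodule.sub_starProjection_mem_orthogonal (K := N) (g : H₂)
    have hm_mem : m ∈ T.adjoint.domain := by
      apply T.mem_adjoint_domain_of_exists
      exact ⟨0, fun x => by
        rw [inner_zero_left]
        have : ⟪T x, m⟫ = 0 := hmN (T x) (hTN x)
        rw [← inner_conj_symm, this, map_zero]⟩
    have hm0 : T.adjoint ⟨m, hm_mem⟩ = 0 := by
      apply LinearPMap.adjoint_apply_eq hTdense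
      intro x
      rw [inner_zero_left]
      have : ⟪T x, m⟫ = 0 := hmN (T x) (hTN x)
      rw [← inner_conj_symm, this, map_zero]
    have hn_mem : n ∈ T.adjoint.domain := by
      have : n = (g : H₂) - m := by rw [hm, sub_sub_cancel]
      rw [this]
      exact Submodule.sub_mem _ g.2 hm_mem
    have hnval : T.adjoint ⟨n, hn_mem⟩ = T.adjoint g := by
      have hsub : (⟨n, hn_mem⟩ : T.adjoint.domain) = g - ⟨m, hm_mem⟩ := by
        apply Subtype.ext
        simp [hm, sub_sub_cancel]
      rw [hsub, T.adjoint.map_sub, hm0, sub_zero]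
    have hnN : n ∈ N := (Submodule.orthogonalProjectionOnto N (g : H₂)).2
    have h1 : ‖n‖ ≤ C * ‖T.adjoint g‖ := by
      have := hNestim n hnN hn_mem
      rwa [hnval] at this
    have h2 : ⟪(g : H₂), f⟫ = ⟪n, f⟫ := by
      have hmf : ⟪m, f⟫ = 0 := by
        have : ⟪f, m⟫ = 0 := hmN f hfN
        rw [← inner_conj_symm, this, map_zero]
      have : (g : H₂) = n + m := by rw [hm]; abel
      rw [this, inner_add_left, hmf, add_zero]
    rw [h2]
    calc ‖⟪n, f⟫‖ ≤ ‖n‖ * ‖f‖ := norm_inner_le_norm _ _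
      _ ≤ (C * ‖T.adjoint g‖) * ‖f‖ := by
          apply mul_le_mul_of_nonneg_right h1 (norm_nonneg f)
      _ = C * ‖f‖ * ‖T.adjoint g‖ := by ring
  -- the linear functional `T* g ↦ ⟪f, g⟫` on the range of `T*`
  set A : T.adjoint.domain →ₗ[ℂ] H₁ := T.adjoint.toFun with hA
  have hAapp : ∀ g : T.adjoint.domain, A g = T.adjoint g := fun _ => rfl
  set ψ : T.adjoint.domain →ₗ[ℂ] ℂ :=
    (innerSL ℂ f).toLinearMap.comp (T.adjoint.domain.subtype) with hψ
  have hψapp : ∀ g : T.adjoint.domain, ψ g = ⟪f, (g : H₂)⟫ := fun _ => rfl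
  have hψbound : ∀ g : T.adjoint.domain, ‖ψ g‖ ≤ (C * ‖f‖) * ‖A g‖ := by
    intro g
    rw [hψapp, ← inner_conj_symm]
    rw [RCLike.norm_conj]
    exact key g
  have hker : LinearMap.ker A ≤ LinearMap.ker ψ := by
    intro g hg
    rw [LinearMap.mem_ker] at hg ⊢
    have := hψbound g
    rw [hg, norm_zero, mul_zero] at this
    exact norm_le_zero_iff.mp this
  set ℓ : LinearMap.range A →ₗ[ℂ] ℂ :=
    ((LinearMap.ker A).liftQ ψ hker).comp A.quotKerEquivRange.symm.toLinearMap with hℓ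
  have hℓapp : ∀ g : T.adjoint.domain,
      ℓ ⟨A g, LinearMap.mem_range_self A g⟩ = ψ g := by
    intro g
    rw [hℓ]
    simp only [LinearMap.coe_comp, Function.comp_apply, LinearEquiv.coe_toLinearMap]
    rw [A.quotKerEquivRange_symm_apply_image g (LinearMap.mem_range_self A g)]
    rfl
  have hℓbound : ∀ y : LinearMap.range A, ‖ℓ y‖ ≤ (C * ‖f‖) * ‖y‖ := by
    rintro ⟨y, hy⟩
    obtain ⟨g, rfl⟩ := hy
    rw [hℓapp g]
    exact hψbound g
  set ℓc : LinearMap.range A →L[ℂ] ℂ := ℓ.mkContinuous (C * ‖f‖) hℓbound with hℓc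
  obtain ⟨Φ, hΦ, hΦnorm⟩ := exists_extension_norm_eq (LinearMap.range A) ℓc
  have hΦle : ‖Φ‖ ≤ C * ‖f‖ := by
    rw [hΦnorm]
    exact ℓ.mkContinuous_norm_le (by positivity) hℓbound
  set v : H₁ := (InnerProductSpace.toDual ℂ H₁).symm Φ with hv
  have hvnorm : ‖v‖ ≤ C * ‖f‖ := by
    rw [hv, LinearIsometryEquiv.norm_map]
    exact hΦle
  have hvinner : ∀ g : T.adjoint.domain, ⟪v, A g⟫ = ⟪f, (g : H₂)⟫ := by
    intro g
    rw [hv, InnerProductSpace.toDual_symm_apply]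
    have := hΦ ⟨A g, LinearMap.mem_range_self A g⟩
    rw [this]
    rw [hℓc]
    rw [show (ℓ.mkContinuous (C * ‖f‖) hℓbound) ⟨A g, LinearMap.mem_range_self A g⟩
      = ℓ ⟨A g, LinearMap.mem_range_self A g⟩ from rfl, hℓapp g, hψapp g]
  -- now show `(v, f)` belongs to the (closed) graph of `T`
  set e : WithLp 2 (H₁ × H₂) ≃L[ℂ] H₁ × H₂ := WithLp.prodContinuousLinearEquiv 2 ℂ H₁ H₂ with he
  set G : Submodule ℂ (WithLp 2 (H₁ × H₂)) :=
    T.graph.comap (e : WithLp 2 (H₁ × H₂) →ₗ[ℂ] H₁ × H₂) with hG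
  have hGmem : ∀ x : WithLp 2 (H₁ × H₂), x ∈ G ↔ e x ∈ T.graph := fun _ => Iff.rfl
  have hGclosed : IsClosed (G : Set (WithLp 2 (H₁ × H₂))) := by
    have : (G : Set (WithLp 2 (H₁ × H₂))) = e ⁻¹' (T.graph : Set (H₁ × H₂)) := rfl
    rw [this]
    exact hTclosed.preimage e.continuous
  set w : WithLp 2 (H₁ × H₂) := (WithLp.equiv 2 (H₁ × H₂)).symm (v, f) with hw
  have hwG : w ∈ G := by
    have horth : w ∈ Gᗮᗮ := by
      rw [Submodule.mem_orthogonal]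
      intro z hz
      rw [Submodule.mem_orthogonal] at hz
      -- components of z
      set a : H₁ := z.fst with ha
      set b : H₂ := z.snd with hb
      have hzx : ∀ x : T.domain, ⟪(x : H₁), a⟫ + ⟪T x, b⟫ = 0 := by
        intro x
        have hmemG : (WithLp.equiv 2 (H₁ × H₂)).symm ((x : H₁), T x) ∈ G := by
          rw [hGmem]
          exact T.mem_graph x
        have := hz _ hmemG
        rwa [WithLp.prod_inner_apply] at this
      have hbmem : b ∈ T.adjoint.domain := by
        apply T.mem_adjoint_domain_of_exists
        refine ⟨-a, fun x => ?_⟩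
        have := hzx x
        rw [← inner_conj_symm b (T x)]
        rw [show ⟪T x, b⟫ = -⟪(x : H₁), a⟫ by linear_combination this]
        rw [map_neg, inner_conj_symm, inner_neg_left]
      have hba : T.adjoint ⟨b, hbmem⟩ = -a := by
        apply LinearPMap.adjoint_apply_eq hTdense
        intro x
        have := hzx x
        rw [← inner_conj_symm b (T x)]
        rw [show ⟪T x, b⟫ = -⟪(x : H₁), a⟫ by linear_combination this]
        rw [map_neg, inner_conj_symm, inner_neg_left]
      have hav : ⟪a, v⟫ = -⟪b, f⟫ := by
        have h1 : ⟪v, A ⟨b, hbmem⟩⟫ = ⟪f, b⟫ := hvinner ⟨b, hbmem⟩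
        have h2 : A ⟨b, hbmem⟩ = -a := hba
        rw [h2, inner_neg_right] at h1
        calc ⟪a, v⟫ = (starRingEnd ℂ) ⟪v, a⟫ := (inner_conj_symm _ _).symm
          _ = (starRingEnd ℂ) (-⟪f, b⟫) := by rw [show ⟪v, a⟫ = -⟪f, b⟫ by
                linear_combination -h1]
          _ = -⟪b, f⟫ := by rw [map_neg, inner_conj_symm]
      rw [WithLp.prod_inner_apply]
      have hw1 : w.fst = v := rfl
      have hw2 : w.snd = f := rfl
      change ⟪a, w.fst⟫ + ⟪b, w.snd⟫ = 0
      rw [hw1, hw2, hav]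
      ring
    have hGG : Gᗮᗮ = G := by
      rw [Submodule.orthogonal_orthogonal_eq_closure]
      exact hGclosed.submodule_topologicalClosure_eq
    rwa [hGG] at horth
  rw [hGmem] at hwG
  have : (v, f) ∈ T.graph := hwG
  rw [T.mem_graph_iff] at this
  obtain ⟨u, hu1, hu2⟩ := this
  exact ⟨u, hu2, by rw [hu1]; exact hvnorm⟩
end
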